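/- For any finite-dimensional poset P: (a) bd-dim(P) equals the supremum of bd-dim(P') over all finite (nonempty) subposets P' of P; and (b) abs(P) equals the infimum of abs(P') over all finite subposets P' of P satisfying dim(P') = dim(P). -/

import Mathlib

/-!
Both parts rest on compactness of order dimension: if every finite subposet of `P` has
dimension at most `n`, a limit of their realizers along an ultrafilter is a realizer of `P`
with `n` linear orders. So a finite-dimensional poset has a finite subposet of full dimension,
which may be enlarged by any finitely many points. For (a), apply this inside an interval of
maximal dimension, keeping its endpoints. For (b), a subposet of full dimension absorbs at
least as many chains as `P`; conversely, if `abs P + 1` chains raise the dimension of `P`,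
a finite part `G` of the product already does, and then so do the same chains for any finite
full-dimensional `S` containing the first projection of `G`.
-/

universe u

/-- The order dimension of a poset: the least cardinal `κ` such that the partial
order is the intersection of `κ` linear orderings (each extending it). -/
noncomputable def orderDim (α : Type u) [PartialOrder α] : Cardinal.{u} :=
  sInf {κ : Cardinal.{u} | ∃ (ι : Type u) (r : ι → α → α → Prop),
    (∀ i, IsLinearOrder α (r i)) ∧
    (∀ x y : α, x ≤ y ↔ ∀ i, r i x y) ∧
    Cardinal.mk ι = κ}

/-- The absorbency of a (finite-dimensional) poset `P`: the largest natural
number `n` such that taking the product of `P` with any `n`-tuple of (nonempty)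
chains does not change the dimension. -/
noncomputable def absorb (P : Type u) [PartialOrder P] : ℕ :=
  sSup {n : ℕ | ∀ (T : Fin n → Type u) [∀ i, LinearOrder (T i)] [∀ i, Nonempty (T i)],
    orderDim (P × ∀ i, T i) = orderDim P}

/-- The bounded dimension of a (finite-dimensional) poset `P`: the greatest
natural number `n` such that some bounded subposet of `P` (equivalently, some
nonempty interval `[p, p']`) has dimension `n`. -/
noncomputable def bdDim (P : Type u) [PartialOrder P] : ℕ :=
  sSup {n : ℕ | ∃ p p' : P, p ≤ p' ∧ orderDim ↥(Set.Icc p p') = n}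

open Cardinal Filter Set

section Realizers

variable {α β : Type u} [PartialOrder α] [PartialOrder β]

structure IsRealizer {ι : Type*} (r : ι → α → α → Prop) : Prop where
  isLinearOrder : ∀ i, IsLinearOrder α (r i)
  le_iff : ∀ x y, x ≤ y ↔ ∀ i, r i x y

/-- Szpilrajn's theorem applied to `≤` with the pair `(a, b)` added. -/
theorem exists_linearExtension_of_not_le {a b : α} (h : ¬ b ≤ a) :
    ∃ r : α → α → Prop, IsLinearOrder α r ∧ (∀ x y : α, x ≤ y → r x y) ∧ r a b := by
  let s : α → α → Prop := fun x y => x ≤ y ∨ (x ≤ a ∧ b ≤ y)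
  have : IsPartialOrder α s :=
    { refl := fun x => Or.inl le_rfl
      trans := by
        rintro x y z (hxy | ⟨hxa, hby⟩) (hyz | ⟨hya, hbz⟩)
        exacts [Or.inl (hxy.trans hyz), Or.inr ⟨hxy.trans hya, hbz⟩,
          Or.inr ⟨hxa, hby.trans hyz⟩, absurd (hby.trans hya) h]
      antisymm := by
        rintro x y (hxy | ⟨hxa, hby⟩) (hyx | ⟨hya, hbx⟩)
        exacts [le_antisymm hxy hyx, absurd ((hbx.trans hxy).trans hya) h,
          absurd ((hby.trans hyx).trans hxa) h, absurd (hby.trans hya) h] }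
  obtain ⟨r, hr, hsr⟩ := extend_partialOrder s
  exact ⟨r, hr, fun x y hxy => hsr _ _ (Or.inl hxy), hsr _ _ (Or.inr ⟨le_rfl, le_rfl⟩)⟩

theorem exists_isRealizer_mk_eq_orderDim (α : Type u) [PartialOrder α] :
    ∃ (ι : Type u) (r : ι → α → α → Prop), IsRealizer r ∧ #ι = orderDim α := by
  have hne : {κ : Cardinal.{u} | ∃ (ι : Type u) (r : ι → α → α → Prop),
      (∀ i, IsLinearOrder α (r i)) ∧ (∀ x y : α, x ≤ y ↔ ∀ i, r i x y) ∧ #ι = κ}.Nonempty := by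
    let ι := {r : α → α → Prop // IsLinearOrder α r ∧ ∀ x y : α, x ≤ y → r x y}
    refine ⟨#ι, ι, Subtype.val, fun i => i.2.1, fun x y => ⟨fun hxy i => i.2.2 x y hxy, ?_⟩,
      rfl⟩
    intro hall
    by_contra hxy
    obtain ⟨r, hr, hext, hyx⟩ := exists_linearExtension_of_not_le hxy
    exact hxy (hr.antisymm _ _ (hall ⟨r, hr, hext⟩) hyx ▸ le_rfl)
  obtain ⟨ι, r, h₁, h₂, h₃⟩ := csInf_mem hne
  exact ⟨ι, r, ⟨h₁, h₂⟩, h₃⟩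

theorem orderDim_le_mk {ι : Type u} {r : ι → α → α → Prop} (hr : IsRealizer r) :
    orderDim α ≤ #ι :=
  csInf_le' ⟨ι, r, hr.1, hr.2, rfl⟩

/-- Unused indices of `κ` are filled with one fixed linear extension. -/
theorem exists_isRealizer_of_orderDim_le {κ : Type u} (h : orderDim α ≤ #κ) :
    ∃ r : κ → α → α → Prop, IsRealizer r := by
  classical
  obtain ⟨ι, r, hr, hι⟩ := exists_isRealizer_mk_eq_orderDim α
  obtain ⟨f⟩ := (Cardinal.le_def ι κ).1 (hι ▸ h)
  obtain ⟨s, hs, hle⟩ := extend_partialOrder ((· ≤ ·) : α → α → Prop)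
  let r' := Function.extend f r fun _ => s
  have hr' : ∀ k, (∃ i, r' k = r i) ∨ r' k = s := fun k => by
    by_cases hk : ∃ i, f i = k
    · exact Or.inl ⟨hk.choose, by simp only [r', Function.extend_def, dif_pos hk]⟩
    · exact Or.inr (by simp only [r', Function.extend_def, dif_neg hk])
  refine ⟨r', fun k => ?_, fun x y =>
    ⟨fun hxy k => ?_, fun hxy => (hr.le_iff x y).2 fun i => ?_⟩⟩
  · obtain ⟨i, hi⟩ | hk := hr' k
    · exact hi ▸ hr.isLinearOrder i
    · exact hk ▸ hs
  · obtain ⟨i, hi⟩ | hk := hr' k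
    · exact hi ▸ (hr.le_iff x y).1 hxy i
    · exact hk ▸ hle x y hxy
  · simpa [r', f.injective.extend_apply] using hxy (f i)

theorem orderDim_le_of_orderEmbedding (f : α ↪o β) : orderDim α ≤ orderDim β := by
  obtain ⟨ι, r, hr, hι⟩ := exists_isRealizer_mk_eq_orderDim β
  refine hι ▸ orderDim_le_mk (r := fun i x y => r i (f x) (f y)) ⟨fun i => ?_, fun x y => ?_⟩
  · have := hr.isLinearOrder i
    exact { refl := fun x => this.refl _
            trans := fun x y z => this.trans _ _ _
            antisymm := fun x y hxy hyx => f.injective (this.antisymm _ _ hxy hyx)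
            total := fun x y => this.total _ _ }
  · rw [← f.le_iff_le, hr.le_iff]

theorem orderDim_le_of_map {f : α → β} (hf : ∀ x y, f x ≤ f y ↔ x ≤ y) :
    orderDim α ≤ orderDim β :=
  orderDim_le_of_orderEmbedding (OrderEmbedding.ofMapLEIff f hf)

theorem orderDim_subtype_le (p : α → Prop) : orderDim (Subtype p) ≤ orderDim α :=
  orderDim_le_of_orderEmbedding (OrderEmbedding.subtype p)

theorem orderDim_le_prod_left [Nonempty β] : orderDim α ≤ orderDim (α × β) :=
  orderDim_le_of_map (f := fun x => (x, Classical.arbitrary β)) fun _ _ => by simp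

theorem orderDim_le_prod_right [Nonempty α] : orderDim β ≤ orderDim (α × β) :=
  orderDim_le_of_map (f := fun y => (Classical.arbitrary α, y)) fun _ _ => by simp

/-- The standard example `Sₙ`: a linear order reversing one pair `(a i, b i)` reverses no
other. -/
theorem mk_le_orderDim_of_standardExample {κ : Type u} {a b : κ → α}
    (hab : ∀ i k, i ≠ k → a i ≤ b k) (hba : ∀ i, ¬ a i ≤ b i) : #κ ≤ orderDim α := by
  obtain ⟨ι, r, hr, hι⟩ := exists_isRealizer_mk_eq_orderDim α
  have : ∀ i, ∃ l, ¬ r l (a i) (b i) := fun i => by simpa [hr.le_iff] using hba i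
  choose g hg using this
  refine hι ▸ Cardinal.mk_le_of_injective (f := g) fun i k hik => by_contra fun hne => hg i ?_
  have hl := hr.isLinearOrder (g i)
  have hki : r (g i) (b k) (a k) := (hl.total _ _).resolve_left (hik ▸ hg k)
  exact hl.trans _ _ _ (hl.trans _ _ _ ((hr.le_iff _ _).1 (hab i k hne) _) hki)
    ((hr.le_iff _ _).1 (hab k i (Ne.symm hne)) _)

theorem natCast_le_orderDim_pi_bool (n : ℕ) :
    (n : Cardinal.{u}) ≤ orderDim (Fin n → ULift.{u} Bool) := by
  have := mk_le_orderDim_of_standardExample (κ := ULift.{u} (Fin n))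
    (a := fun i j => ULift.up (decide (j = i.down)))
    (b := fun i j => ULift.up (decide (j ≠ i.down)))
    (fun i k hik j => by
      by_cases hj : j = i.down
      · have : j ≠ k.down := hj ▸ fun h => hik (ULift.ext _ _ h)
        simp [this]
      · simp [hj])
    (fun i h => absurd (by simpa using h i.down) (by decide : ¬ (true ≤ false)))
  simpa using this

end Realizers

section Compactness

theorem isLinearOrder_ultrafilter_limit {β γ : Type*} (U : Ultrafilter β)
    {s : β → γ → γ → Prop}
    (refl : ∀ x, ∀ᶠ b in U, s b x x)
    (trans : ∀ x y z, ∀ᶠ b in U, s b x y → s b y z → s b x z)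
    (antisymm : ∀ x y, ∀ᶠ b in U, s b x y → s b y x → x = y)
    (total : ∀ x y, ∀ᶠ b in U, s b x y ∨ s b y x) :
    IsLinearOrder γ fun x y => ∀ᶠ b in U, s b x y where
  refl := refl
  trans x y z hxy hyz := ((trans x y z).and (hxy.and hyz)).mono fun _ h => h.1 h.2.1 h.2.2
  antisymm x y hxy hyx := ((antisymm x y).and (hxy.and hyx)).exists.elim fun _ h => h.1 h.2.1 h.2.2
  total x y := Ultrafilter.eventually_or.1 (total x y)

variable {α : Type u} [PartialOrder α]

/-- Realizers of the finite subposets, all indexed by `Fin n`, converge along an ultrafilter on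
`Finset α` finer than `atTop` to a realizer of `α`. -/
theorem orderDim_le_of_forall_finite {n : ℕ}
    (h : ∀ S : Set α, S.Finite → orderDim S ≤ n) : orderDim α ≤ n := by
  let ι := ULift.{u} (Fin n)
  have hι : #ι = n := by simp [ι]
  have hR (F : Finset α) :
      ∃ r : ι → ↥(F : Set α) → ↥(F : Set α) → Prop, IsRealizer r :=
    exists_isRealizer_of_orderDim_le (by rw [hι]; exact h F F.finite_toSet)
  choose R hR using hR
  let U := Ultrafilter.of (atTop : Filter (Finset α))
  have hU (x : α) : ∀ᶠ F : Finset α in U, x ∈ (F : Set α) :=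
    Ultrafilter.of_le _ <| (eventually_ge_atTop {x}).mono fun _ hF =>
      Finset.mem_coe.2 (hF (Finset.mem_singleton_self x))
  let s (F : Finset α) (i : ι) (x y : α) : Prop :=
    ∃ (hx : x ∈ (F : Set α)) (hy : y ∈ (F : Set α)), R F i ⟨x, hx⟩ ⟨y, hy⟩
  rw [← hι]
  refine orderDim_le_mk (r := fun i x y => ∀ᶠ F in U, s F i x y)
    ⟨fun i => ?_, fun x y => ?_⟩
  · refine isLinearOrder_ultrafilter_limit U (fun x => ?_) (fun x y z => ?_) (fun x y => ?_)
      (fun x y => ?_)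
    · exact (hU x).mono fun F hx => ⟨hx, hx, ((hR F).isLinearOrder i).refl _⟩
    · refine .of_forall fun F => ?_
      rintro ⟨hx, _, hxy⟩ ⟨_, hz, hyz⟩
      exact ⟨hx, hz, ((hR F).isLinearOrder i).trans _ _ _ hxy hyz⟩
    · refine .of_forall fun F => ?_
      rintro ⟨_, _, hxy⟩ ⟨_, _, hyx⟩
      exact congrArg Subtype.val (((hR F).isLinearOrder i).antisymm _ _ hxy hyx)
    · exact ((hU x).and (hU y)).mono fun F ⟨hx, hy⟩ =>
        (((hR F).isLinearOrder i).total ⟨x, hx⟩ ⟨y, hy⟩).imp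
          (⟨hx, hy, ·⟩) (⟨hy, hx, ·⟩)
  · refine ⟨fun hxy i => ((hU x).and (hU y)).mono fun F ⟨hx, hy⟩ =>
      ⟨hx, hy, ((hR F).le_iff ⟨x, hx⟩ ⟨y, hy⟩).1 hxy i⟩, fun hxy => ?_⟩
    obtain ⟨F, hF, hx, hy⟩ := ((eventually_all.2 hxy).and ((hU x).and (hU y))).exists
    exact ((hR F).le_iff ⟨x, hx⟩ ⟨y, hy⟩).2 fun i => (hF i).2.2

theorem exists_finite_le_orderDim (hα : orderDim α < ℵ₀) :
    ∃ S : Set α, S.Finite ∧ orderDim α ≤ orderDim S := by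
  obtain ⟨_ | m, hm⟩ := lt_aleph0.1 hα
  · exact ⟨∅, finite_empty, by simp [hm]⟩
  by_contra! hS
  have : orderDim α ≤ m := orderDim_le_of_forall_finite fun S hSfin => by
    obtain ⟨k, hk⟩ := lt_aleph0.1 ((hS S hSfin).trans hα)
    have : k < m + 1 := by exact_mod_cast hk ▸ hm ▸ hS S hSfin
    exact hk ▸ (by exact_mod_cast Nat.lt_succ_iff.1 this)
  exact absurd (hm ▸ this) (by exact_mod_cast Nat.not_succ_le_self m)

theorem exists_finite_superset_orderDim_eq (hα : orderDim α < ℵ₀) {T : Set α}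
    (hT : T.Finite) :
    ∃ S : Set α, T ⊆ S ∧ S.Finite ∧ orderDim S = orderDim α := by
  obtain ⟨S, hSfin, hS⟩ := exists_finite_le_orderDim hα
  refine ⟨S ∪ T, subset_union_right, hSfin.union hT, (orderDim_subtype_le _).antisymm ?_⟩
  exact hS.trans (orderDim_le_of_map (f := fun x => ⟨x.1, Or.inl x.2⟩) fun _ _ => Iff.rfl)

end Compactness

section BoundedDimension

variable {X Y : Type u} [PartialOrder X] [PartialOrder Y]

def bdDimSet (X : Type u) [PartialOrder X] : Set ℕ :=
  {n : ℕ | ∃ p p' : X, p ≤ p' ∧ orderDim ↥(Icc p p') = n}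

theorem bdDimSet_bddAbove (hX : orderDim X < ℵ₀) : BddAbove (bdDimSet X) := by
  obtain ⟨N, hN⟩ := lt_aleph0.1 hX
  refine ⟨N, fun n ⟨p, p', _, hn⟩ => ?_⟩
  exact_mod_cast hn ▸ hN ▸ orderDim_subtype_le _

theorem orderDim_subtype_lt_aleph0 (hX : orderDim X < ℵ₀) (p : X → Prop) :
    orderDim (Subtype p) < ℵ₀ :=
  (orderDim_subtype_le p).trans_lt hX

theorem orderDim_Icc_le_bdDim (hX : orderDim X < ℵ₀) {p p' : X} (h : p ≤ p') :
    orderDim ↥(Icc p p') ≤ bdDim X := by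
  have hI := cast_toNat_of_lt_aleph0 (orderDim_subtype_lt_aleph0 hX (· ∈ Icc p p'))
  rw [← hI]
  exact_mod_cast le_csSup (bdDimSet_bddAbove hX) ⟨p, p', h, hI.symm⟩

theorem exists_Icc_orderDim_eq_bdDim [Nonempty X] (hX : orderDim X < ℵ₀) :
    ∃ p p' : X, p ≤ p' ∧ orderDim ↥(Icc p p') = bdDim X := by
  let p := Classical.arbitrary X
  exact Nat.sSup_mem (s := bdDimSet X)
    ⟨_, p, p, le_rfl, (cast_toNat_of_lt_aleph0 (orderDim_subtype_lt_aleph0 hX _)).symm⟩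
    (bdDimSet_bddAbove hX)

theorem bdDim_le_of_orderEmbedding (hX : orderDim X < ℵ₀) (f : Y ↪o X) :
    bdDim Y ≤ bdDim X := by
  refine csSup_le' fun n ⟨q, q', hqq', hn⟩ => ?_
  have : orderDim ↥(Icc q q') ≤ orderDim ↥(Icc (f q) (f q')) :=
    orderDim_le_of_map (f := fun x => ⟨f x, f.monotone x.2.1, f.monotone x.2.2⟩)
      fun _ _ => f.le_iff_le
  exact_mod_cast hn ▸ this.trans (orderDim_Icc_le_bdDim hX (f.monotone hqq'))

/-- A finite subset of an interval of maximal dimension that has the dimension of the interval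
and contains both endpoints is its own interval in `X`. -/
theorem exists_finite_bdDim_eq [Nonempty X] (hX : orderDim X < ℵ₀) :
    ∃ S : Set X, S.Finite ∧ S.Nonempty ∧ bdDim S = bdDim X := by
  obtain ⟨p, p', hpp', hI⟩ := exists_Icc_orderDim_eq_bdDim hX
  obtain ⟨S, hpS, hSfin, hS⟩ := exists_finite_superset_orderDim_eq
    (orderDim_subtype_lt_aleph0 hX (· ∈ Icc p p'))
    (toFinite ({⟨p, le_rfl, hpp'⟩, ⟨p', hpp', le_rfl⟩} : Set (Icc p p')))
  have hp : p ∈ Subtype.val '' S := ⟨_, hpS (mem_insert _ _), rfl⟩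
  have hp' : p' ∈ Subtype.val '' S := ⟨_, hpS (mem_insert_of_mem _ rfl), rfl⟩
  refine ⟨_, hSfin.image _, ⟨p, hp⟩,
    (bdDim_le_of_orderEmbedding hX (OrderEmbedding.subtype _)).antisymm ?_⟩
  have : orderDim S ≤ orderDim ↥(Icc (⟨p, hp⟩ : Subtype.val '' S) ⟨p', hp'⟩) :=
    orderDim_le_of_map
      (f := fun x : S => ⟨⟨x.1.1, mem_image_of_mem _ x.2⟩, x.1.2.1, x.1.2.2⟩) fun _ _ => Iff.rfl
  exact_mod_cast (hS.trans hI).symm.le.trans <| this.trans <|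
    orderDim_Icc_le_bdDim (orderDim_subtype_lt_aleph0 hX _) (show p ≤ p' from hpp')

theorem isGreatest_bdDim_finite_subsets [Nonempty X] (hX : orderDim X < ℵ₀) :
    IsGreatest {m : ℕ | ∃ S : Set X, S.Finite ∧ S.Nonempty ∧ bdDim S = m} (bdDim X) :=
  ⟨exists_finite_bdDim_eq hX, fun _ ⟨S, _, _, hS⟩ =>
    hS ▸ bdDim_le_of_orderEmbedding hX (OrderEmbedding.subtype (· ∈ S))⟩

end BoundedDimension

section Absorbency

variable {X Y : Type u} [PartialOrder X] [PartialOrder Y]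

def absorbSet (X : Type u) [PartialOrder X] : Set ℕ :=
  {n : ℕ | ∀ (T : Fin n → Type u) [∀ i, LinearOrder (T i)] [∀ i, Nonempty (T i)],
    orderDim (X × ∀ i, T i) = orderDim X}

theorem zero_mem_absorbSet : 0 ∈ absorbSet X := fun _ _ _ =>
  (orderDim_le_of_map (f := Prod.fst) fun _ _ =>
    ⟨fun h => Prod.le_def.2 ⟨h, fun i => i.elim0⟩, fun h => (Prod.le_def.1 h).1⟩).antisymm
    orderDim_le_prod_left

/-- A tuple of `m ≤ n` chains is padded to `n` chains by repeating its last chain. -/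
theorem mem_absorbSet_of_le {m n : ℕ} (hmn : m ≤ n) (hn : n ∈ absorbSet X) :
    m ∈ absorbSet X := by
  obtain _ | m := m
  · exact zero_mem_absorbSet
  intro T _ _
  let f : Fin n → Fin (m + 1) := fun j => ⟨min j m, Nat.lt_succ_of_le (min_le_right _ _)⟩
  have hf : f.Surjective := fun i => ⟨⟨i, by omega⟩, Fin.ext (by simp [f]; omega)⟩
  refine le_antisymm ?_ orderDim_le_prod_left
  calc orderDim (X × ∀ i, T i) ≤ orderDim (X × ∀ j, T (f j)) :=
        orderDim_le_of_map (f := fun x => (x.1, fun j => x.2 (f j))) fun x y => by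
          simp only [Prod.le_def, Pi.le_def, ← hf.forall (p := fun i => x.2 i ≤ y.2 i)]
    _ = orderDim X := hn _

theorem natCast_le_orderDim_of_mem_absorbSet [Nonempty X] {n : ℕ} (hn : n ∈ absorbSet X) :
    (n : Cardinal) ≤ orderDim X :=
  hn (fun _ => ULift Bool) ▸ (natCast_le_orderDim_pi_bool n).trans orderDim_le_prod_right

theorem le_absorb_iff [Nonempty X] (hX : orderDim X < ℵ₀) {n : ℕ} :
    n ≤ absorb X ↔ n ∈ absorbSet X := by
  obtain ⟨N, hN⟩ := lt_aleph0.1 hX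
  have hbdd : BddAbove (absorbSet X) := ⟨N, fun n hn => by
    exact_mod_cast hN ▸ natCast_le_orderDim_of_mem_absorbSet hn⟩
  exact ⟨fun h => mem_absorbSet_of_le h (Nat.sSup_mem ⟨0, zero_mem_absorbSet⟩ hbdd),
    fun h => le_csSup hbdd h⟩

theorem absorbSet_subset_of_orderDim_eq (f : Y ↪o X) (h : orderDim Y = orderDim X) :
    absorbSet X ⊆ absorbSet Y := fun n hn T _ _ => by
  refine le_antisymm ?_ orderDim_le_prod_left
  calc orderDim (Y × ∀ i, T i) ≤ orderDim (X × ∀ i, T i) :=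
        orderDim_le_of_map (f := fun x => (f x.1, x.2)) fun _ _ => by simp [Prod.le_def]
    _ = orderDim Y := (hn T).trans h.symm

theorem absorb_le_of_orderDim_eq [Nonempty Y] (hX : orderDim X < ℵ₀) (f : Y ↪o X)
    (h : orderDim Y = orderDim X) : absorb X ≤ absorb Y :=
  have : Nonempty X := ⟨f (Classical.arbitrary Y)⟩
  (le_absorb_iff (h ▸ hX)).2 <| absorbSet_subset_of_orderDim_eq f h <| (le_absorb_iff hX).1 le_rfl

theorem exists_finite_absorb_eq [Nonempty X] (hX : orderDim X < ℵ₀) :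
    ∃ S : Set X, S.Finite ∧ S.Nonempty ∧ orderDim S = orderDim X ∧ absorb S = absorb X := by
  obtain ⟨N, hN⟩ := lt_aleph0.1 hX
  have hnot : absorb X + 1 ∉ absorbSet X := fun h => by have := (le_absorb_iff hX).2 h; omega
  simp only [absorbSet, mem_ofPred_eq, not_forall] at hnot
  obtain ⟨T, _, _, hT⟩ := hnot
  obtain ⟨G, hGfin, hG⟩ : ∃ G : Set (X × ∀ i, T i), G.Finite ∧ ¬ orderDim G ≤ N := by
    by_contra! hG
    exact hT ((hN ▸ orderDim_le_of_forall_finite hG).antisymm orderDim_le_prod_left)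
  let x₀ := Classical.arbitrary X
  obtain ⟨S, hGS, hSfin, hS⟩ :=
    exists_finite_superset_orderDim_eq hX ((hGfin.image Prod.fst).insert x₀)
  have : Nonempty S := ⟨⟨x₀, hGS (mem_insert _ _)⟩⟩
  have hnotS : absorb X + 1 ∉ absorbSet S := fun h => hG <| hN ▸ hS ▸ h T ▸
    orderDim_le_of_map
      (f := fun g : G => (⟨g.1.1, hGS (mem_insert_of_mem _ ⟨g, g.2, rfl⟩)⟩, g.1.2))
      fun _ _ => Iff.rfl
  refine ⟨S, hSfin, .of_subtype, hS, le_antisymm ?_ <|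
    absorb_le_of_orderDim_eq hX (OrderEmbedding.subtype _) hS⟩
  by_contra! h
  exact hnotS ((le_absorb_iff (hS ▸ hX)).1 h)

theorem isLeast_absorb_finite_subsets [Nonempty X] (hX : orderDim X < ℵ₀) :
    IsLeast
      {m : ℕ | ∃ S : Set X, S.Finite ∧ S.Nonempty ∧ orderDim S = orderDim X ∧ absorb S = m}
      (absorb X) :=
  ⟨exists_finite_absorb_eq hX, fun _ ⟨S, _, hSne, hS, hm⟩ =>
    have : Nonempty S := hSne.to_subtype
    hm ▸ absorb_le_of_orderDim_eq hX (OrderEmbedding.subtype _) hS⟩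

end Absorbency

theorem stmt19 (P : Type u) [PartialOrder P] [Nonempty P]
    (hfd : orderDim P < Cardinal.aleph0) :
    bdDim P = sSup {m : ℕ | ∃ S : Set P, S.Finite ∧ S.Nonempty ∧ bdDim ↥S = m} ∧
    absorb P = sInf {m : ℕ | ∃ S : Set P, S.Finite ∧ S.Nonempty ∧
      orderDim ↥S = orderDim P ∧ absorb ↥S = m} :=
  ⟨(isGreatest_bdDim_finite_subsets hfd).csSup_eq.symm,
    (isLeast_absorb_finite_subsets hfd).csInf_eq.symm⟩
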